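/- arXiv:1602.00344 — 5 statements merged into one kernel-verified Lean document; each statement's English description precedes it below -/
import Mathlib

section
/- Let X ⊂ ℤ_{>0} be a finite set of positive integers. Then M_0(X) ≤ 1 + ⌊log(‖X‖_∞)⌋. -/
/-- The numerical semigroup generated by the elements of `X`: all values of
nonnegative integer combinations of elements of `X`. -/
def SgN (X : Finset ℕ) : Set ℕ :=
  { b | ∃ lam : ℕ → ℕ, ∑ i ∈ X, lam i * i = b }

/-- `m0N X b` is the least number of nonzero coefficients in a representation
of `b` as a nonnegative integer combination of the elements of `X`. -/
noncomputable def m0N (X : Finset ℕ) (b : ℕ) : ℕ :=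
  sInf { k | ∃ lam : ℕ → ℕ, (∑ i ∈ X, lam i * i = b) ∧
    k = (X.filter fun i => lam i ≠ 0).card }

/-!
Take a representation `b = ∑ λᵢ i` with the fewest nonzero coefficients, let `S` be its support,
`k = #S`, and fix `m ∈ S`. If two distinct subsets of `S \ {m}` had weighted sums `∑ λᵢ i`
congruent modulo `m`, then removing the common part leaves disjoint `A`, `B` with
`∑_A λᵢ i = ∑_B λᵢ i + c m`; dropping the terms of `A`, doubling those of `B` and adding `c` to
`λₘ` represents `b` with a smaller support. Hence the `2 ^ (k - 1)` subset sums are distinct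
modulo `m`, so `2 ^ (k - 1) ≤ m ≤ max X`.
-/

open Finset

lemma m0N_le_card {X : Finset ℕ} {b : ℕ} {mu : ℕ → ℕ} (hmu : ∑ i ∈ X, mu i * i = b) :
    m0N X b ≤ (X.filter (mu · ≠ 0)).card :=
  Nat.sInf_le ⟨mu, hmu, rfl⟩

lemma exists_card_eq_m0N {X : Finset ℕ} {b : ℕ} (hb : b ∈ SgN X) :
    ∃ lam : ℕ → ℕ, ∑ i ∈ X, lam i * i = b ∧ (X.filter (lam · ≠ 0)).card = m0N X b := by
  obtain ⟨lam, hlam⟩ := hb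
  obtain ⟨mu, hmu, hcard⟩ := Nat.sInf_mem (⟨_, lam, hlam, rfl⟩ :
    {k | ∃ lam : ℕ → ℕ, (∑ i ∈ X, lam i * i = b) ∧ k = (X.filter (lam · ≠ 0)).card}.Nonempty)
  exact ⟨mu, hmu, hcard.symm⟩

lemma le_one_add_floor_logb_of_two_pow_le {k M : ℕ} (h : 2 ^ (k - 1) ≤ M) :
    (k : ℤ) ≤ 1 + ⌊Real.logb 2 (M : ℝ)⌋ := by
  have hlog : k - 1 ≤ Nat.log 2 M := Nat.le_log_of_pow_le one_lt_two h
  rw [show (2 : ℝ) = ((2 : ℕ) : ℝ) by norm_num, Real.floor_logb_natCast (Nat.cast_nonneg M),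
    Int.log_natCast]
  omega

section Exchange

variable {X : Finset ℕ} {lam : ℕ → ℕ}

def exchange (lam : ℕ → ℕ) (A B : Finset ℕ) (m c : ℕ) (i : ℕ) : ℕ :=
  if i ∈ A then 0 else lam i + (if i ∈ B then lam i else 0) + (if i = m then c else 0)

lemma sum_exchange_add {A B : Finset ℕ} {m c : ℕ} (hA : A ⊆ X) (hB : B ⊆ X) (hm : m ∈ X)
    (hAB : Disjoint A B) (hmA : m ∉ A) (hmB : m ∉ B) :
    ∑ i ∈ X, exchange lam A B m c i * i + ∑ i ∈ A, lam i * i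
      = ∑ i ∈ X, lam i * i + ∑ i ∈ B, lam i * i + c * m := by
  have hsum (T : Finset ℕ) (hT : T ⊆ X) :
      ∑ i ∈ T, lam i * i = ∑ i ∈ X, if i ∈ T then lam i * i else 0 := by
    rw [sum_ite_mem, inter_eq_right.mpr hT]
  have hm' : c * m = ∑ i ∈ X, if i = m then c * i else 0 := by simp [hm]
  rw [hsum A hA, hsum B hB, hm', ← sum_add_distrib, ← sum_add_distrib, ← sum_add_distrib]
  refine sum_congr rfl fun i _ => ?_
  unfold exchange
  by_cases hiA : i ∈ A
  · have hiB : i ∉ B := disjoint_left.mp hAB hiA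
    have him : i ≠ m := by rintro rfl; exact hmA hiA
    simp [hiA, hiB, him]
  · by_cases him : i = m
    · subst him
      simp only [hmA, hmB, ↓reduceIte]
      ring
    · by_cases hiB : i ∈ B <;> simp only [hiA, hiB, him, ↓reduceIte] <;> ring

lemma exists_card_support_lt_of_sum_eq {A B : Finset ℕ} {m c : ℕ}
    (hm : m ∈ X.filter (lam · ≠ 0)) (hA : A ⊆ (X.filter (lam · ≠ 0)).erase m) (hB : B ⊆ X)
    (hAB : Disjoint A B) (hmB : m ∉ B) (hAne : A.Nonempty)
    (hc : ∑ i ∈ A, lam i * i = ∑ i ∈ B, lam i * i + c * m) :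
    ∃ mu : ℕ → ℕ, ∑ i ∈ X, mu i * i = ∑ i ∈ X, lam i * i ∧
      (X.filter (mu · ≠ 0)).card < (X.filter (lam · ≠ 0)).card := by
  set S := X.filter (lam · ≠ 0)
  have hAS : A ⊆ S := hA.trans (erase_subset m S)
  have hmA : m ∉ A := fun h => (mem_erase.mp (hA h)).1 rfl
  have hmX : m ∈ X := (mem_filter.mp hm).1
  refine ⟨exchange lam A B m c, ?_, ?_⟩
  · have := sum_exchange_add (lam := lam) (c := c) (hAS.trans (filter_subset _ X)) hB hmX hAB
      hmA hmB
    omega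
  · refine lt_of_le_of_lt (card_le_card fun i hi => ?_) (card_lt_card (sdiff_ssubset hAS hAne))
    obtain ⟨hiX, hi⟩ := mem_filter.mp hi
    by_cases hiA : i ∈ A
    · simp [exchange, hiA] at hi
    · refine mem_sdiff.mpr ⟨?_, hiA⟩
      by_cases him : i = m
      · exact him ▸ hm
      · refine mem_filter.mpr ⟨hiX, fun h0 => hi ?_⟩
        simp [exchange, hiA, him, h0]

lemma exists_card_support_lt_of_modEq (hpos : ∀ n ∈ X, 0 < n) {m : ℕ}
    (hm : m ∈ X.filter (lam · ≠ 0)) {T₁ T₂ : Finset ℕ}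
    (h₁ : T₁ ⊆ (X.filter (lam · ≠ 0)).erase m) (h₂ : T₂ ⊆ (X.filter (lam · ≠ 0)).erase m)
    (hne : T₁ ≠ T₂) (hmod : ∑ i ∈ T₁, lam i * i ≡ ∑ i ∈ T₂, lam i * i [MOD m]) :
    ∃ mu : ℕ → ℕ, ∑ i ∈ X, mu i * i = ∑ i ∈ X, lam i * i ∧
      (X.filter (mu · ≠ 0)).card < (X.filter (lam · ≠ 0)).card := by
  wlog hle : ∑ i ∈ T₂ \ T₁, lam i * i ≤ ∑ i ∈ T₁ \ T₂, lam i * i generalizing T₁ T₂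
  · exact this h₂ h₁ hne.symm hmod.symm (le_of_not_ge hle)
  have hS : (X.filter (lam · ≠ 0)).erase m ⊆ X := (erase_subset _ _).trans (filter_subset _ X)
  have hcommon (T T' : Finset ℕ) :
      ∑ i ∈ T ∩ T', lam i * i + ∑ i ∈ T \ T', lam i * i = ∑ i ∈ T, lam i * i :=
    sum_inter_add_sum_sdiff T T' _
  have hmodAB : ∑ i ∈ T₂ \ T₁, lam i * i ≡ ∑ i ∈ T₁ \ T₂, lam i * i [MOD m] := by
    refine Nat.ModEq.add_left_cancel' (∑ i ∈ T₁ ∩ T₂, lam i * i) ?_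
    rw [hcommon, inter_comm, hcommon]
    exact hmod.symm
  obtain ⟨c, hc⟩ := (Nat.modEq_iff_dvd' hle).mp hmodAB
  have hAne : (T₁ \ T₂).Nonempty := by
    by_contra hA
    rw [not_nonempty_iff_eq_empty, sdiff_eq_empty_iff_subset] at hA
    have hB : (T₂ \ T₁).Nonempty := sdiff_nonempty.mpr fun h => hne (hA.antisymm h)
    have hpos_sum : 0 < ∑ i ∈ T₂ \ T₁, lam i * i := sum_pos (fun i hi => by
      obtain ⟨hiX, hi⟩ := mem_filter.mp (mem_of_mem_erase (h₂ (mem_sdiff.mp hi).1))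
      exact Nat.mul_pos (Nat.pos_of_ne_zero hi) (hpos i hiX)) hB
    rw [sdiff_eq_empty_iff_subset.mpr hA, sum_empty] at hle
    omega
  refine exists_card_support_lt_of_sum_eq (c := c) hm (sdiff_subset.trans h₁)
    ((sdiff_subset.trans h₂).trans hS) disjoint_sdiff_sdiff
    (fun h => (mem_erase.mp (h₂ (mem_sdiff.mp h).1)).1 rfl) hAne ?_
  rw [mul_comm c m, ← hc]
  omega

lemma two_pow_card_support_sub_one_le (hpos : ∀ n ∈ X, 0 < n)
    (hmin : ∀ mu : ℕ → ℕ, ∑ i ∈ X, mu i * i = ∑ i ∈ X, lam i * i →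
      (X.filter (lam · ≠ 0)).card ≤ (X.filter (mu · ≠ 0)).card)
    {m : ℕ} (hm : m ∈ X.filter (lam · ≠ 0)) :
    2 ^ ((X.filter (lam · ≠ 0)).card - 1) ≤ m := by
  have hinj : Set.InjOn (fun T => (∑ i ∈ T, lam i * i) % m)
      ((X.filter (lam · ≠ 0)).erase m).powerset := by
    intro T₁ h₁ T₂ h₂ hmod
    by_contra hne
    obtain ⟨mu, hmu, hlt⟩ := exists_card_support_lt_of_modEq hpos hm
      (mem_powerset.mp h₁) (mem_powerset.mp h₂) hne hmod
    exact (hmin mu hmu).not_gt hlt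
  have hmpos : 0 < m := hpos m (mem_filter.mp hm).1
  have := card_le_card_of_injOn _ (fun T _ => mem_range.mpr (Nat.mod_lt _ hmpos)) hinj
  rwa [card_powerset, card_range, card_erase_of_mem hm] at this

end Exchange

/-- **Theorem 2.** Let `X ⊂ ℤ_{>0}` be a finite set of positive integers.
Then `M₀(X) ≤ 1 + ⌊log₂ ‖X‖_∞⌋`, i.e., every `b ∈ Sg(X)` has a representation
with at most `1 + ⌊log₂ (max X)⌋` nonzero coefficients. -/
theorem knapsack_M0_le_one_add_log (X : Finset ℕ) (hne : X.Nonempty)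
    (hpos : ∀ n ∈ X, 0 < n) (b : ℕ) (hb : b ∈ SgN X) :
    (m0N X b : ℤ) ≤ 1 + ⌊Real.logb 2 ((X.max' hne : ℕ) : ℝ)⌋ := by
  obtain ⟨lam, hsum, hcard⟩ := exists_card_eq_m0N hb
  have hmin : ∀ mu : ℕ → ℕ, ∑ i ∈ X, mu i * i = ∑ i ∈ X, lam i * i →
      (X.filter (lam · ≠ 0)).card ≤ (X.filter (mu · ≠ 0)).card :=
    fun mu hmu => hcard ▸ m0N_le_card (hmu.trans hsum)
  refine le_one_add_floor_logb_of_two_pow_le ?_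
  rw [← hcard]
  rcases (X.filter (lam · ≠ 0)).eq_empty_or_nonempty with hS | ⟨m, hm⟩
  · simpa [hS] using Nat.one_le_of_lt (hpos _ (X.max'_mem hne))
  · exact (two_pow_card_support_sub_one_le hpos hmin hm).trans
      (X.le_max' m (mem_filter.mp hm).1)
end

section
/- Let X be a finite set of positive integers and let b ∈ Sg(X). If |X| > 1 + log(‖X‖_∞), then there exists a proper subset Y ⊊ X such that b ∈ Sg(Y). -/
/-- Key exchange lemma: given a representation and two disjoint subsets of
`X.erase M` whose sums differ by a multiple of `M`, with the larger-sum one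
nonempty, we can rewrite the representation to avoid some element. -/
lemma knapsack_aux (X : Finset ℕ) (b : ℕ) (lam : ℕ → ℕ)
    (hrep : ∑ i ∈ X, lam i * i = b)
    (M : ℕ) (hM : M ∈ X)
    (A' B' : Finset ℕ) (hA : A' ⊆ X.erase M) (hB : B' ⊆ X.erase M)
    (hdisj : Disjoint A' B') (hAne : A'.Nonempty)
    (hle : ∑ i ∈ B', i ≤ ∑ i ∈ A', i)
    (hdvd : M ∣ (∑ i ∈ A', i) - (∑ i ∈ B', i)) :
    ∃ Y : Finset ℕ, Y ⊂ X ∧ b ∈ SgN Y := by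
  obtain ⟨i0, hi0A, hmin⟩ := Finset.exists_min_image A' lam hAne
  obtain ⟨k, hk⟩ := hdvd
  set t := lam i0 with ht
  have hkk : ∑ i ∈ A', i = ∑ i ∈ B', i + M * k := by omega
  have hi0X : i0 ∈ X := Finset.mem_of_mem_erase (hA hi0A)
  have hMA : M ∉ A' := fun h => (Finset.mem_erase.mp (hA h)).1 rfl
  have hMB : M ∉ B' := fun h => (Finset.mem_erase.mp (hB h)).1 rfl
  have hAX : A' ⊆ X := hA.trans (Finset.erase_subset _ _)
  have hBX : B' ⊆ X := hB.trans (Finset.erase_subset _ _)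
  set lam' : ℕ → ℕ := fun i =>
    if i ∈ A' then lam i - t
    else if i = M then lam i + t * k
    else if i ∈ B' then lam i + t else lam i with hlam'
  have key : ∀ i ∈ X, lam' i * i + (if i ∈ A' then t * i else 0)
      = lam i * i + (if i = M then t * k * i else 0) + (if i ∈ B' then t * i else 0) := by
    intro i hi
    by_cases hiA : i ∈ A'
    · have h1 : i ≠ M := fun h => hMA (h ▸ hiA)
      have h2 : i ∉ B' := Finset.disjoint_left.mp hdisj hiA
      have h3 : t ≤ lam i := hmin i hiA
      simp only [hlam', if_pos hiA, if_neg h1, if_neg h2]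
      have h5 := Nat.sub_mul (lam i) t i
      have h4 : t * i ≤ lam i * i := Nat.mul_le_mul_right i h3
      omega
    · by_cases hiM : i = M
      · have h2 : i ∉ B' := fun h => hMB (hiM ▸ h)
        simp only [hlam', if_neg hiA, if_pos hiM, if_neg h2]
        have := Nat.add_mul (lam i) (t * k) i
        omega
      · by_cases hiB : i ∈ B'
        · simp only [hlam', if_neg hiA, if_neg hiM, if_pos hiB]
          have := Nat.add_mul (lam i) t i
          omega
        · simp only [hlam', if_neg hiA, if_neg hiM, if_neg hiB]
    
  have hsum := Finset.sum_congr rfl key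
  rw [Finset.sum_add_distrib, Finset.sum_add_distrib, Finset.sum_add_distrib] at hsum
  have e1 : ∑ i ∈ X, (if i ∈ A' then t * i else 0) = t * ∑ i ∈ A', i := by
    rw [Finset.sum_ite_mem, Finset.inter_eq_right.mpr hAX, Finset.mul_sum]
  have e2 : ∑ i ∈ X, (if i ∈ B' then t * i else 0) = t * ∑ i ∈ B', i := by
    rw [Finset.sum_ite_mem, Finset.inter_eq_right.mpr hBX, Finset.mul_sum]
  have e3 : ∑ i ∈ X, (if i = M then t * k * i else 0) = t * k * M := by
    rw [Finset.sum_ite_eq' X M (fun i => t * k * i), if_pos hM]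
  rw [e1, e2, e3, hrep] at hsum
  have e4 : t * ∑ i ∈ A', i = t * ∑ i ∈ B', i + t * k * M := by
    rw [hkk]; ring
  have hfin : ∑ i ∈ X, lam' i * i = b := by omega
  have hz : lam' i0 * i0 = 0 := by
    simp only [hlam', if_pos hi0A]
    simp [ht]
  refine ⟨X.erase i0, Finset.erase_ssubset hi0X, lam', ?_⟩
  have := Finset.add_sum_erase X (fun i => lam' i * i) hi0X
  omega

/-- **Lemma 3.** Let `X` be a finite set of positive integers and `b ∈ Sg(X)`.
If `|X| > 1 + log₂ ‖X‖_∞` then there is a proper subset `Y ⊊ X` with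
`b ∈ Sg(Y)`. -/
theorem knapsack_exists_proper_subset (X : Finset ℕ) (hne : X.Nonempty)
    (hpos : ∀ n ∈ X, 0 < n) (b : ℕ) (hb : b ∈ SgN X)
    (hcard : (X.card : ℝ) > 1 + Real.logb 2 ((X.max' hne : ℕ) : ℝ)) :
    ∃ Y : Finset ℕ, Y ⊂ X ∧ b ∈ SgN Y := by
  obtain ⟨lam, hrep⟩ := hb
  set M := X.max' hne with hMdef
  have hMX : M ∈ X := X.max'_mem hne
  have hMpos : 0 < M := hpos M hMX
  have hn1 : 1 ≤ X.card := Finset.card_pos.mpr hne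
  -- numeric step: M < 2 ^ (X.card - 1)
  have hnum : M < 2 ^ (X.card - 1) := by
    have h1 : Real.logb 2 (M : ℝ) < (X.card : ℝ) - 1 := by linarith
    have h2 : (M : ℝ) < (2 : ℝ) ^ (((X.card : ℝ) - 1)) := by
      have := Real.rpow_logb (by norm_num : (0:ℝ) < 2) (by norm_num : (2:ℝ) ≠ 1)
        (by exact_mod_cast hMpos : (0:ℝ) < (M:ℝ))
      calc (M : ℝ) = (2:ℝ) ^ (Real.logb 2 (M:ℝ)) := this.symm
        _ < (2:ℝ) ^ ((X.card : ℝ) - 1) := by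
            exact Real.rpow_lt_rpow_left_iff (by norm_num) |>.mpr h1
    have h3 : ((X.card : ℝ) - 1) = ((X.card - 1 : ℕ) : ℝ) := by
      rw [Nat.cast_sub hn1]; norm_num
    rw [h3, Real.rpow_natCast] at h2
    exact_mod_cast h2
  -- pigeonhole on subset sums of X.erase M modulo M
  haveI : NeZero M := ⟨hMpos.ne'⟩
  have hcardE : (X.erase M).card = X.card - 1 := Finset.card_erase_of_mem hMX
  have hlt : (Finset.univ : Finset (ZMod M)).card < ((X.erase M).powerset).card := by
    rw [Finset.card_powerset, hcardE, Finset.card_univ, ZMod.card]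
    exact hnum
  obtain ⟨A, hA, B, hB, hAB, hfeq⟩ :=
    Finset.exists_ne_map_eq_of_card_lt_of_maps_to hlt
      (fun A _ => Finset.mem_univ (∑ i ∈ A, (i : ZMod M)))
  rw [Finset.mem_powerset] at hA hB
  have hmodAB : (∑ i ∈ A, i) ≡ (∑ i ∈ B, i) [MOD M] := by
    have : ((∑ i ∈ A, i : ℕ) : ZMod M) = ((∑ i ∈ B, i : ℕ) : ZMod M) := by
      push_cast; exact hfeq
    exact (ZMod.natCast_eq_natCast_iff _ _ _).mp this
  set A' := A \ B with hA'def
  set B' := B \ A with hB'def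
  have hsA : ∑ i ∈ A ∩ B, i + ∑ i ∈ A', i = ∑ i ∈ A, i :=
    Finset.sum_inter_add_sum_sdiff A B _
  have hsB : ∑ i ∈ A ∩ B, i + ∑ i ∈ B', i = ∑ i ∈ B, i := by
    rw [Finset.inter_comm]
    exact Finset.sum_inter_add_sum_sdiff B A _
  have hmod : (∑ i ∈ A', i) ≡ (∑ i ∈ B', i) [MOD M] := by
    have : ∑ i ∈ A ∩ B, i + ∑ i ∈ A', i ≡ ∑ i ∈ A ∩ B, i + ∑ i ∈ B', i [MOD M] := by
      rw [hsA, hsB]; exact hmodAB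
    exact Nat.ModEq.add_left_cancel' _ this
  have hA'sub : A' ⊆ X.erase M := Finset.sdiff_subset.trans hA
  have hB'sub : B' ⊆ X.erase M := Finset.sdiff_subset.trans hB
  have hA'B' : A' ≠ B' := by
    intro h
    apply hAB
    apply Finset.Subset.antisymm
    · intro x hx
      by_contra hxB
      have hx' : x ∈ A' := Finset.mem_sdiff.mpr ⟨hx, hxB⟩
      rw [h] at hx'
      exact hxB (Finset.mem_sdiff.mp hx').1
    · intro x hx
      by_contra hxA
      have hx' : x ∈ B' := Finset.mem_sdiff.mpr ⟨hx, hxA⟩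
      rw [← h] at hx'
      exact hxA (Finset.mem_sdiff.mp hx').1
  have hdisj : Disjoint A' B' := disjoint_sdiff_sdiff
  have hposE : ∀ S : Finset ℕ, S ⊆ X.erase M → S ≠ ∅ → 0 < ∑ i ∈ S, i := by
    intro S hS hSne
    obtain ⟨x, hx⟩ := Finset.nonempty_iff_ne_empty.mpr hSne
    have hxX : x ∈ X := Finset.mem_of_mem_erase (hS hx)
    exact Finset.sum_pos' (fun i _ => Nat.zero_le i) ⟨x, hx, hpos x hxX⟩
  rcases le_total (∑ i ∈ B', i) (∑ i ∈ A', i) with hle | hle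
  · have hAne : A'.Nonempty := by
      rw [Finset.nonempty_iff_ne_empty]
      intro h
      have hB0 : ∑ i ∈ B', i = 0 := by
        have : ∑ i ∈ A', i = 0 := by rw [h]; simp
        omega
      have : B' = ∅ := by
        by_contra hc
        have := hposE B' hB'sub hc; omega
      exact hA'B' (h.trans this.symm)
    exact knapsack_aux X b lam hrep M hMX A' B' hA'sub hB'sub hdisj hAne hle
      ((Nat.modEq_iff_dvd' hle).mp hmod.symm)
  · have hBne : B'.Nonempty := by
      rw [Finset.nonempty_iff_ne_empty]
      intro h
      have hA0 : ∑ i ∈ A', i = 0 := by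
        have : ∑ i ∈ B', i = 0 := by rw [h]; simp
        omega
      have : A' = ∅ := by
        by_contra hc
        have := hposE A' hA'sub hc; omega
      exact hA'B' (this.trans h.symm)
    exact knapsack_aux X b lam hrep M hMX B' A' hB'sub hA'sub hdisj.symm hBne hle
      ((Nat.modEq_iff_dvd' hle).mp hmod)
end

section
/- Let d ≥ 2, n ≥ 2, and let X = {2^i·e_j + e_d : i = 0, …, n−1, j = 1, …, d−1} ⊂ ℤ^d, where e_j is the j-th standard basis vector. Then for b = (2^n − 1)·(e_1 + ⋯ + e_{d−1}) + n(d−1)·e_d one has m_0(b) = n(d−1), and consequently M_0(X) = n(d−1). -/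
open Matrix

/-- The integer conic hull (semigroup) generated by the vectors `x i`. -/
def SgV {ι : Type*} [Fintype ι] {d : ℕ} (x : ι → Fin d → ℤ) : Set (Fin d → ℤ) :=
  { b | ∃ lam : ι → ℕ, ∑ i, (lam i : ℤ) • x i = b }

/-- `m0V x b` is the least number of nonzero coefficients in a representation
of `b` as a nonnegative integer combination of the `x i`. -/
noncomputable def m0V {ι : Type*} [Fintype ι] {d : ℕ} (x : ι → Fin d → ℤ)
    (b : Fin d → ℤ) : ℕ :=
  sInf { k | ∃ lam : ι → ℕ, (∑ i, (lam i : ℤ) • x i = b) ∧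
    k = (Finset.univ.filter fun i => lam i ≠ 0).card }

/-- `H ∈ HeightSet x` iff `H = g⁻¹ √(det (Vᵀ V))` for a matrix `V` formed by
`r(X)` linearly independent columns of `W(X)` (whose rows are the `x i`), where
`g` is the gcd of the determinants of all `r × r` submatrices of `V`.  This is
the determinant `H(X)` of the lattice `Λ(X)`. -/
noncomputable def HeightSet {ι : Type*} [Fintype ι] [DecidableEq ι] {d : ℕ}
    (x : ι → Fin d → ℤ) : Set ℝ :=
  { H | ∃ (r : ℕ) (c : Fin r → Fin d),
      r = ((Matrix.of x).map ((↑) : ℤ → ℚ)).rank ∧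
      LinearIndependent ℚ (fun k : Fin r => fun i : ι => (x i (c k) : ℚ)) ∧
      H = Real.sqrt (((Matrix.of fun i k => x i (c k) : Matrix ι (Fin r) ℤ)ᵀ *
              (Matrix.of fun i k => x i (c k) : Matrix ι (Fin r) ℤ)).det : ℝ) /
          ((Finset.univ.gcd fun ρ : Fin r ↪ ι =>
              (Matrix.of fun (i k : Fin r) => x (ρ i) (c k) : Matrix (Fin r) (Fin r) ℤ).det) : ℝ) }

lemma key_lemma : ∀ (n : ℕ) (lam : ℕ → ℕ), (∑ i ∈ Finset.range n, lam i * 2^i = 2^n - 1) →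
    n ≤ (∑ i ∈ Finset.range n, lam i) ∧
    ((∑ i ∈ Finset.range n, lam i) = n → ∀ i < n, lam i = 1) := by
  intro n
  induction n with
  | zero => exact fun lam h => ⟨le_refl 0, fun _ i hi => absurd hi (Nat.not_lt_zero i)⟩
  | succ n ih =>
    intro lam h
    rw [Finset.sum_range_succ'] at h
    have hsplit : ∑ i ∈ Finset.range n, lam (i+1) * 2^(i+1)
        = 2 * ∑ i ∈ Finset.range n, lam (i+1) * 2^i := by
      rw [Finset.mul_sum]
      exact Finset.sum_congr rfl (fun i _ => by ring)
    rw [hsplit] at h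
    set S := ∑ i ∈ Finset.range n, lam (i+1) * 2^i with hS
    set T := ∑ i ∈ Finset.range n, lam (i+1) with hT
    have hpow : 1 ≤ 2^n := Nat.one_le_two_pow
    have h2 : 2^(n+1) = 2 * 2^n := by ring
    have hodd : lam 0 % 2 = 1 := by omega
    set a := lam 0 / 2 with ha
    have hlam0 : lam 0 = 2 * a + 1 := by omega
    have haS : a + S = 2^n - 1 := by omega
    have hsum : ∑ i ∈ Finset.range (n+1), lam i = T + 2*a + 1 := by
      rw [Finset.sum_range_succ', ← hT, hlam0]; ring
    rcases Nat.eq_zero_or_pos n with hn0 | hn1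
    · subst hn0
      simp only [Finset.range_zero, Finset.sum_empty] at hS hT
      rw [hsum]
      constructor
      · omega
      · intro he i hi
        interval_cases i
        omega
    · obtain ⟨m, rfl⟩ : ∃ m, n = m + 1 := ⟨n - 1, by omega⟩
      set mu : ℕ → ℕ := fun i => if i = 0 then a + lam 1 else lam (i+1) with hmu
      have hSsplit : S = ∑ i ∈ Finset.range m, lam (i+2) * 2^(i+1) + lam 1 := by
        rw [hS, Finset.sum_range_succ']
        simp
      have hTsplit : T = ∑ i ∈ Finset.range m, lam (i+2) + lam 1 := by
        rw [hT, Finset.sum_range_succ']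
      have hmusumw : ∑ i ∈ Finset.range (m+1), mu i * 2^i = a + S := by
        rw [Finset.sum_range_succ', hSsplit]
        have : ∀ i ∈ Finset.range m, mu (i+1) * 2^(i+1) = lam (i+2) * 2^(i+1) :=
          fun i _ => by simp [hmu]
        rw [Finset.sum_congr rfl this]
        simp [hmu]
        ring
      have hmusum : ∑ i ∈ Finset.range (m+1), mu i = a + T := by
        rw [Finset.sum_range_succ', hTsplit]
        have : ∀ i ∈ Finset.range m, mu (i+1) = lam (i+2) := fun i _ => by simp [hmu]
        rw [Finset.sum_congr rfl this]
        simp [hmu]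
        ring
      obtain ⟨ihle, iheq⟩ := ih mu (by rw [hmusumw]; omega)
      rw [hmusum] at ihle iheq
      rw [hsum]
      refine ⟨by omega, ?_⟩
      intro he i hi
      have ha0 : a = 0 := by omega
      have hmueq := iheq (by omega)
      match i, hi with
      | 0, _ => omega
      | 1, h1 =>
        have := hmueq 0 (by omega)
        simp [hmu, ha0] at this
        exact this
      | (k+2), hk =>
        have := hmueq (k+1) (by omega)
        simpa [hmu] using this

lemma key_fin (n : ℕ) (g : Fin n → ℕ) (h : ∑ i, g i * 2^(i:ℕ) = 2^n - 1) :
    n ≤ ∑ i, g i ∧ (∑ i, g i = n → ∀ i, g i = 1) := by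
  set G : ℕ → ℕ := fun i => if h : i < n then g ⟨i, h⟩ else 0 with hG
  have e1 : ∑ i ∈ Finset.range n, G i * 2^i = ∑ i, g i * 2^(i:ℕ) := by
    rw [Finset.sum_range fun i => G i * 2^i]
    exact Finset.sum_congr rfl fun i _ => by simp [hG, i.isLt]
  have e2 : ∑ i ∈ Finset.range n, G i = ∑ i, g i := by
    rw [Finset.sum_range G]
    exact Finset.sum_congr rfl fun i _ => by simp [hG, i.isLt]
  obtain ⟨h1, h2⟩ := key_lemma n G (by rw [e1, h])
  rw [e2] at h1 h2
  refine ⟨h1, fun he i => ?_⟩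
  have := h2 he i i.isLt
  simpa [hG, i.isLt] using this

/-- For `d ≥ 2`, `n ≥ 2`, and `X = {2^i e_j + e_d : 0 ≤ i ≤ n-1, 1 ≤ j ≤ d-1}`,
the vector `b = (2^n - 1)(e_1 + ⋯ + e_{d-1}) + n(d-1) e_d` satisfies
`m₀(b) = n(d-1)`, and consequently `M₀(X) = n(d-1)`. -/
theorem M0_example_attained (d n : ℕ) (hd : 2 ≤ d) (hn : 2 ≤ n)
    (x : Fin n × Fin (d - 1) → Fin d → ℤ)
    (hx : ∀ i j k, x (i, j) k =
      (if (k : ℕ) = (j : ℕ) then 2 ^ (i : ℕ) else 0) +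
      (if (k : ℕ) = d - 1 then 1 else 0))
    (b : Fin d → ℤ)
    (hb : ∀ k, b k = if (k : ℕ) < d - 1 then 2 ^ n - 1 else ((n * (d - 1) : ℕ) : ℤ)) :
    b ∈ SgV x ∧ m0V x b = n * (d - 1) ∧
      ∀ b' ∈ SgV x, m0V x b' ≤ n * (d - 1) := by
  have hd1 : 1 ≤ d - 1 := by omega
  have hdd : d - 1 < d := by omega
  have h2n : (1:ℕ) ≤ 2^n := Nat.one_le_two_pow
  set e : Fin d := ⟨d - 1, hdd⟩ with he
  have hcard : Fintype.card (Fin n × Fin (d-1)) = n * (d-1) := by simp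
  -- value of x at the last coordinate
  have hxe : ∀ (i : Fin n) (j : Fin (d-1)), x (i, j) e = 1 := by
    intro i j
    rw [hx]
    have hj := j.isLt
    have hev : (e : ℕ) = d - 1 := rfl
    rw [hev, if_neg (by omega), if_pos rfl, zero_add]
  -- value of x at coordinate j < d-1
  have hxj : ∀ (j : Fin (d-1)) (i : Fin n) (j' : Fin (d-1)),
      x (i, j') (⟨(j:ℕ), by omega⟩ : Fin d) = if j' = j then (2:ℤ)^(i:ℕ) else 0 := by
    intro j i j'
    rw [hx]
    have hj := j.isLt
    have hev : ((⟨(j:ℕ), by omega⟩ : Fin d) : ℕ) = (j:ℕ) := rfl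
    have h2if : (if (j:ℕ) = d - 1 then (1:ℤ) else 0) = 0 := if_neg (by omega)
    rw [hev, h2if, add_zero]
    by_cases hc : j' = j
    · subst hc; rw [if_pos rfl, if_pos rfl]
    · rw [if_neg (fun hcc => hc (Fin.ext hcc.symm)), if_neg hc]
  -- geometric sum
  have hgeom : ∑ i : Fin n, (2:ℤ)^(i:ℕ) = 2^n - 1 := by
    rw [Fin.sum_univ_eq_sum_range (fun i => (2:ℤ)^i)]
    have := geom_sum_mul (2:ℤ) n
    simpa using this
  -- the all-ones representation
  have hones : ∑ p : Fin n × Fin (d-1), (((1:ℕ):ℤ)) • x p = b := by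
    funext k
    rw [Finset.sum_apply]
    simp only [Nat.cast_one, one_smul]
    rcases lt_or_ge (k:ℕ) (d-1) with hk | hk
    · have hbk : b k = 2^n - 1 := by rw [hb, if_pos hk]
      rw [hbk, Fintype.sum_prod_type]
      have hinner : ∀ i : Fin n, ∑ j : Fin (d-1), x (i, j) k = 2^(i:ℕ) := by
        intro i
        have hxk : ∀ j : Fin (d-1), x (i, j) k
            = if j = (⟨(k:ℕ), hk⟩ : Fin (d-1)) then (2:ℤ)^(i:ℕ) else 0 := by
          intro j
          rw [hx, if_neg (by omega : ¬((k:ℕ) = d - 1)), add_zero]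
          by_cases hc : j = (⟨(k:ℕ), hk⟩ : Fin (d-1))
          · subst hc; rw [if_pos rfl, if_pos rfl]
          · rw [if_neg (fun hcc => hc (Fin.ext hcc.symm)), if_neg hc]
        simp [hxk, Finset.sum_ite_eq']
      rw [Finset.sum_congr rfl (fun i _ => hinner i)]
      exact hgeom
    · have hke : (k:ℕ) = d - 1 := by have := k.isLt; omega
      have hbk : b k = ((n*(d-1):ℕ):ℤ) := by rw [hb, if_neg (by omega)]
      rw [hbk]
      have hx1 : ∀ p : Fin n × Fin (d-1), x p k = 1 := by
        rintro ⟨i, j⟩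
        rw [hx, if_neg (by have := j.isLt; omega), if_pos hke, zero_add]
      rw [Finset.sum_congr rfl (fun p _ => hx1 p)]
      rw [Finset.sum_const, Finset.card_univ, hcard]
      push_cast
      ring
  -- extracting coordinate equations from an arbitrary representation
  have hcoords : ∀ lam : Fin n × Fin (d - 1) → ℕ, (∑ p, (lam p : ℤ) • x p = b) →
      (∑ p, lam p = n * (d - 1)) ∧
      ∀ j : Fin (d - 1), (∑ i : Fin n, lam (i, j) * 2 ^ (i:ℕ)) = 2 ^ n - 1 := by
    intro lam hrep
    have heval : ∀ k, ∑ p : Fin n × Fin (d-1), (lam p : ℤ) * x p k = b k := by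
      intro k
      have := congrFun hrep k
      simpa [Finset.sum_apply, smul_eq_mul] using this
    constructor
    · have h1 := heval e
      have hre : ∑ p : Fin n × Fin (d-1), (lam p : ℤ) * x p e = ∑ p, (lam p : ℤ) := by
        refine Finset.sum_congr rfl fun p _ => ?_
        obtain ⟨i, j⟩ := p
        rw [hxe i j, mul_one]
      rw [hre, hb] at h1
      rw [if_neg (by simp [he])] at h1
      exact_mod_cast h1
    · intro j
      have h1 := heval (⟨(j:ℕ), by omega⟩ : Fin d)
      have hre : ∑ p : Fin n × Fin (d-1), (lam p : ℤ) * x p (⟨(j:ℕ), by omega⟩ : Fin d)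
          = ∑ i : Fin n, (lam (i, j) : ℤ) * 2^(i:ℕ) := by
        rw [Fintype.sum_prod_type]
        refine Finset.sum_congr rfl fun i _ => ?_
        simp [hxj j i, mul_ite, Finset.sum_ite_eq']
      rw [hre, hb] at h1
      rw [if_pos (by simpa using j.isLt)] at h1
      have hcast : ((∑ i : Fin n, lam (i, j) * 2 ^ (i:ℕ) : ℕ) : ℤ)
          = ((2^n - 1 : ℕ) : ℤ) := by
        push_cast [Nat.cast_sub h2n]
        exact h1
      exact_mod_cast hcast
  -- every representation of b uses all vectors
  have hforced : ∀ lam : Fin n × Fin (d-1) → ℕ, (∑ p, (lam p : ℤ) • x p = b) →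
      ∀ p, lam p = 1 := by
    intro lam hrep
    obtain ⟨hA, hB⟩ := hcoords lam hrep
    have hge : ∀ j, n ≤ ∑ i : Fin n, lam (i, j) :=
      fun j => (key_fin n (fun i => lam (i, j)) (hB j)).1
    have htot : ∑ j : Fin (d-1), ∑ i : Fin n, lam (i, j) = n * (d-1) := by
      rw [← hA, Fintype.sum_prod_type]
      exact Finset.sum_comm
    have heach : ∀ j, ∑ i : Fin n, lam (i, j) = n := by
      intro j
      by_contra hne
      have hlt : n < ∑ i : Fin n, lam (i, j) := lt_of_le_of_ne (hge j) (Ne.symm hne)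
      have hstrict : ∑ _j : Fin (d-1), n < ∑ j : Fin (d-1), ∑ i : Fin n, lam (i, j) :=
        Finset.sum_lt_sum (fun j' _ => hge j') ⟨j, Finset.mem_univ j, hlt⟩
      rw [htot, Finset.sum_const, Finset.card_univ, Fintype.card_fin, smul_eq_mul,
        mul_comm (d-1) n] at hstrict
      exact lt_irrefl _ hstrict
    rintro ⟨i, j⟩
    exact (key_fin n (fun i => lam (i, j)) (hB j)).2 (heach j) i
  refine ⟨⟨fun _ => 1, hones⟩, ?_, ?_⟩
  · -- m0V x b = n * (d-1)
    have hmem : (n * (d-1)) ∈ { k | ∃ lam : Fin n × Fin (d-1) → ℕ,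
        (∑ i, (lam i : ℤ) • x i = b) ∧
        k = (Finset.univ.filter fun i => lam i ≠ 0).card } := by
      refine ⟨fun _ => 1, hones, ?_⟩
      rw [Finset.filter_true_of_mem (by intro p _; exact one_ne_zero), Finset.card_univ, hcard]
    have hlow : ∀ k ∈ { k | ∃ lam : Fin n × Fin (d-1) → ℕ,
        (∑ i, (lam i : ℤ) • x i = b) ∧
        k = (Finset.univ.filter fun i => lam i ≠ 0).card }, n * (d-1) ≤ k := by
      rintro k ⟨lam, hrep, rfl⟩
      have h1 := hforced lam hrep
      rw [Finset.filter_true_of_mem (by intro p _; rw [h1 p]; exact one_ne_zero),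
        Finset.card_univ, hcard]
    rw [m0V]
    have hne : Set.Nonempty { k | ∃ lam : Fin n × Fin (d-1) → ℕ,
        (∑ i, (lam i : ℤ) • x i = b) ∧
        k = (Finset.univ.filter fun i => lam i ≠ 0).card } := ⟨_, hmem⟩
    exact le_antisymm (Nat.sInf_le hmem) (hlow _ (Nat.sInf_mem hne))
  · rintro b' ⟨lam, hrep⟩
    rw [m0V]
    calc sInf { k | ∃ lam : Fin n × Fin (d-1) → ℕ,
          (∑ i, (lam i : ℤ) • x i = b') ∧
          k = (Finset.univ.filter fun i => lam i ≠ 0).card }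
        ≤ (Finset.univ.filter fun i => lam i ≠ 0).card := Nat.sInf_le ⟨lam, hrep, rfl⟩
      _ ≤ Finset.univ.card := Finset.card_filter_le _ _
      _ = n * (d-1) := by rw [Finset.card_univ, hcard]
end

section
/- Let X ⊂ ℤ_{≥0}^d be a finite set of nonzero nonnegative integer vectors. Then the function m_0 : Sg(X) → ℤ_{≥0} is eventually quasiconstant; that is, the function f : ℤ_{≥0}^d → ℤ_{≥0} defined by f(b) = m_0(b) for b ∈ Sg(X) and f(b) = 0 otherwise, can be written as a finite sum f = f_1 + ⋯ + f_k, where each f_i vanishes outside a translated cone C_i = b_i + Sg({v_{i,1}, …, v_{i,s_i}}) ⊂ ℤ_{≥0}^d (with b_i ∈ ℤ_{≥0}^d and v_{i,1}, …, v_{i,s_i} ∈ ℤ_{≥0}^d linearly independent) and is constant on C_i. -/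
/-!
Write `m₀ = ∑_{n<t} (1_{Sg X} - 1_{U_n})`, where `U_n = {b ∈ Sg X : m₀ b ≤ n}` is the union of
the semigroups generated by the `n`-element subsets of `X`. By inclusion–exclusion it suffices
that the indicator of every finitely generated submonoid of `ℕ^d` is eventually quasiconstant,
because these submonoids are closed under intersection: the solutions of `∑ αᵢ vᵢ = ∑ βⱼ wⱼ` form
a submonoid closed under subtraction, which is generated by its finitely many (Dickson) minimal
nonzero elements.

For `Sg Z`, represent each point by its lexicographically least coefficient vector. The
non-least coefficient vectors form an upper set of `ℕ^m`, so by Dickson's lemma membership in it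
only depends on the truncation `λ ⊓ B` for a suitable `B`. The fibres of this truncation are
translated coordinate orthants; on those made of least vectors `λ ↦ ∑ λᵢ zᵢ` is injective, so
their images are simple cones, and they partition `Sg Z`.
-/

/-- The integer conic hull (semigroup) generated by nonnegative integer
vectors `x i`. -/
def SgNV {ι : Type*} [Fintype ι] {d : ℕ} (x : ι → Fin d → ℕ) : Set (Fin d → ℕ) :=
  { b | ∃ lam : ι → ℕ, ∑ i, lam i • x i = b }

/-- `m0NV x b` is the least number of nonzero coefficients in a representation
of `b` as a nonnegative integer combination of the `x i`. -/
noncomputable def m0NV {ι : Type*} [Fintype ι] {d : ℕ} (x : ι → Fin d → ℕ)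
    (b : Fin d → ℕ) : ℕ :=
  sInf { k | ∃ lam : ι → ℕ, (∑ i, lam i • x i = b) ∧
    k = (Finset.univ.filter fun i => lam i ≠ 0).card }

/-- The cone generated by `v 0, …, v (s-1)` translated by `b0`. -/
def TransCone {d s : ℕ} (b0 : Fin d → ℕ) (v : Fin s → Fin d → ℕ) :
    Set (Fin d → ℕ) :=
  { b | ∃ lam : Fin s → ℕ, b0 + ∑ l, lam l • v l = b }

open Function Set

def eventuallyQuasiconstant (d : ℕ) : Submodule ℚ ((Fin d → ℕ) → ℚ) :=
  Submodule.span ℚ {f | ∃ (s : ℕ) (b0 : Fin d → ℕ) (v : Fin s → Fin d → ℕ),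
    LinearIndependent ℚ (fun l j => (v l j : ℚ)) ∧ f = (TransCone b0 v).indicator 1}

theorem linearIndependent_natCast_of_injective {ι : Type*} [Fintype ι] {d : ℕ}
    {v : ι → Fin d → ℕ} (hv : Injective (Fintype.linearCombination ℕ v)) :
    LinearIndependent ℚ (fun i j => (v i j : ℚ)) := by
  rw [← LinearIndependent.iff_fractionRing ℤ ℚ, Fintype.linearIndependent_iff]
  intro g hg i
  have hsplit : Fintype.linearCombination ℕ v (fun i => (g i).toNat) =
      Fintype.linearCombination ℕ v (fun i => (-g i).toNat) := by
    ext j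
    have hj : ∑ i, (g i * v i j : ℤ) = 0 := by
      exact_mod_cast (by simpa using congrFun hg j : ∑ i, (g i : ℚ) * v i j = 0)
    have : ((∑ i, (g i).toNat * v i j : ℕ) : ℤ) = ((∑ i, (-g i).toNat * v i j : ℕ) : ℤ) := by
      push_cast
      rw [← sub_eq_zero, ← Finset.sum_sub_distrib, ← hj]
      simp_rw [← sub_mul, Int.toNat_sub_toNat_neg]
    simpa [Fintype.linearCombination_apply] using Int.ofNat_inj.1 this
  have := congrFun (hv hsplit) i
  omega

theorem indicator_range_add_linearCombination_mem {ι : Type*} [Fintype ι] {d : ℕ}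
    (b0 : Fin d → ℕ) {v : ι → Fin d → ℕ} (hv : Injective (Fintype.linearCombination ℕ v)) :
    (range fun c => b0 + Fintype.linearCombination ℕ v c).indicator 1 ∈
      eventuallyQuasiconstant d := by
  let e := (Fintype.equivFin ι).symm
  refine Submodule.subset_span ⟨_, b0, v ∘ e,
    (linearIndependent_natCast_of_injective hv).comp e e.injective, ?_⟩
  congr 1
  ext b
  simp only [mem_range, Fintype.linearCombination_apply, TransCone, comp_apply]
  constructor
  · rintro ⟨c, rfl⟩
    exact ⟨c ∘ e, by rw [← e.sum_comp]; rfl⟩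
  · rintro ⟨lam, rfl⟩
    exact ⟨lam ∘ e.symm, by rw [← e.sum_comp]; simp⟩

theorem IsUpperSet.exists_inf_mem_iff {α : Type*} [Lattice α] [OrderBot α]
    [WellQuasiOrderedLE α] {U : Set α} (hU : IsUpperSet U) :
    ∃ B, ∀ a, a ⊓ B ∈ U ↔ a ∈ U := by
  have hfin : {a | Minimal (· ∈ U) a}.Finite :=
    WellQuasiOrderedLE.finite_of_isAntichain (setOfPred_minimal_antichain _)
  refine ⟨hfin.toFinset.sup id, fun a => ⟨fun h => hU inf_le_left h, fun h => ?_⟩⟩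
  obtain ⟨g, hga, hg⟩ := exists_minimal_le_of_wellFoundedLT (· ∈ U) a h
  exact hU (le_inf hga (Finset.le_sup (f := id) (hfin.mem_toFinset.2 hg))) hg.1

theorem setOf_inf_eq_range_add_extend {ι : Type*} {B a : ι → ℕ} (ha : a ≤ B) :
    {l | l ⊓ B = a} = range fun c : {i // a i = B i} → ℕ => a + extend Subtype.val c 0 := by
  ext l
  constructor
  · intro hl
    refine ⟨fun i => l i - a i, funext fun j => ?_⟩
    have hj := congrFun (show l ⊓ B = a from hl) j
    simp only [Pi.inf_apply] at hj
    by_cases hjB : a j = B j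
    · simp only [Pi.add_apply, extend_val_apply (p := fun i => a i = B i) hjB]
      omega
    · simp only [Pi.add_apply, extend_val_apply' (p := fun i => a i = B i) hjB, Pi.zero_apply]
      omega
  · rintro ⟨c, rfl⟩
    funext j
    have hj : a j ≤ B j := ha j
    by_cases hjB : a j = B j
    · simp only [Pi.inf_apply, Pi.add_apply, extend_val_apply (p := fun i => a i = B i) hjB]
      omega
    · simp only [Pi.inf_apply, Pi.add_apply, extend_val_apply' (p := fun i => a i = B i) hjB,
        Pi.zero_apply]
      omega

theorem sum_extend_val_smul {ι M : Type*} [Fintype ι] [AddCommMonoid M] (p : ι → Prop)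
    [DecidablePred p] (c : {i // p i} → ℕ) (z : ι → M) :
    ∑ i, extend Subtype.val c 0 i • z i = ∑ i : {i // p i}, c i • z i := by
  rw [← Fintype.sum_subtype_add_sum_subtype p]
  simp [fun i : {i // ¬p i} => extend_val_apply' (g := c) (j := 0) i.2]

theorem indicator_image_eq_sum_fibers {α β γ M : Type*} [AddCommMonoid M] {f : α → β}
    (τ : α → γ) (A : Finset γ) (hf : InjOn f (τ ⁻¹' A)) (g : β → M) :
    (f '' (τ ⁻¹' A)).indicator g = ∑ a ∈ A, (f '' (τ ⁻¹' {a})).indicator g := by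
  rw [← biUnion_preimage_singleton, image_iUnion₂, Finset.set_biUnion_coe,
    Finset.indicator_biUnion]
  · ext b; simp
  · intro a ha a' ha' hne
    refine disjoint_left.2 ?_
    rintro _ ⟨l, rfl, rfl⟩ ⟨l', rfl, hll'⟩
    exact hne (congrArg τ (hf ha ha' hll'.symm))

section LexMinimal

variable {ι M : Type*} [LinearOrder ι] [AddCommMonoid M]

def lexNonMinimal (f : (ι → ℕ) →+ M) : Set (ι → ℕ) :=
  {l | ∃ l', f l' = f l ∧ toLex l' < toLex l}

theorem isUpperSet_lexNonMinimal (f : (ι → ℕ) →+ M) : IsUpperSet (lexNonMinimal f) := by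
  rintro l _ hle ⟨l', hf, hlt⟩
  obtain ⟨δ, rfl⟩ := exists_add_of_le hle
  exact ⟨l' + δ, by simp [hf], add_lt_add_left hlt (toLex δ)⟩

theorem injOn_compl_lexNonMinimal [Finite ι] (f : (ι → ℕ) →+ M) :
    InjOn f (lexNonMinimal f)ᶜ := by
  intro l hl l' hl' heq
  by_contra hne
  rcases lt_or_gt_of_ne (toLex.injective.ne hne) with hlt | hlt
  · exact hl' ⟨l, heq, hlt⟩
  · exact hl ⟨l', heq.symm, hlt⟩

theorem image_compl_lexNonMinimal [Finite ι] (f : (ι → ℕ) →+ M) :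
    f '' (lexNonMinimal f)ᶜ = range f := by
  refine (image_subset_range _ _).antisymm ?_
  rintro _ ⟨l, rfl⟩
  obtain ⟨l', hl', hmin⟩ := WellFounded.has_min wellFounded_lt {l' : Lex (ι → ℕ) | f l' = f l}
    ⟨toLex l, rfl⟩
  exact ⟨ofLex l', fun ⟨l'', hf, hlt⟩ => hmin (toLex l'') (hf.trans hl') hlt, hl'⟩

end LexMinimal

theorem indicator_image_inf_fiber_mem {ι : Type*} [Fintype ι] {d : ℕ} (z : ι → Fin d → ℕ)
    {B a : ι → ℕ} (ha : a ≤ B)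
    (hinj : InjOn (Fintype.linearCombination ℕ z) {l | l ⊓ B = a}) :
    (Fintype.linearCombination ℕ z '' {l | l ⊓ B = a}).indicator 1 ∈
      eventuallyQuasiconstant d := by
  have hlin : ∀ c : {i // a i = B i} → ℕ,
      Fintype.linearCombination ℕ z (a + extend Subtype.val c 0) =
        Fintype.linearCombination ℕ z a +
          Fintype.linearCombination ℕ (fun i : {i // a i = B i} => z i) c := fun c => by
    simp only [map_add, Fintype.linearCombination_apply, sum_extend_val_smul]
  have hmem : ∀ c : {i // a i = B i} → ℕ, a + extend Subtype.val c 0 ∈ {l | l ⊓ B = a} := fun c =>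
    (setOf_inf_eq_range_add_extend ha).symm ▸ mem_range_self c
  rw [setOf_inf_eq_range_add_extend ha, ← range_comp]
  simp only [comp_def, hlin]
  refine indicator_range_add_linearCombination_mem _ fun c c' hcc' => ?_
  refine extend_injective Subtype.val_injective (0 : ι → ℕ)
    (add_left_cancel (hinj (hmem c) (hmem c') ?_))
  rw [hlin, hlin, hcc']

theorem indicator_span_range_mem {m d : ℕ} (z : Fin m → Fin d → ℕ) :
    (Submodule.span ℕ (range z) : Set (Fin d → ℕ)).indicator 1 ∈ eventuallyQuasiconstant d := by
  classical
  set φ := Fintype.linearCombination ℕ z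
  set U := lexNonMinimal φ.toAddMonoidHom
  obtain ⟨B, hB⟩ := IsUpperSet.exists_inf_mem_iff (isUpperSet_lexNonMinimal φ.toAddMonoidHom)
  set A := (Finset.Iic B).filter (· ∉ U)
  have hA : (· ⊓ B) ⁻¹' (A : Set (Fin m → ℕ)) = Uᶜ := by
    ext l; simpa [A] using not_congr (hB l)
  have hinj : InjOn φ ((· ⊓ B) ⁻¹' (A : Set (Fin m → ℕ))) :=
    hA ▸ injOn_compl_lexNonMinimal φ.toAddMonoidHom
  have hrange : (Submodule.span ℕ (range z) : Set (Fin d → ℕ)) = φ '' ((· ⊓ B) ⁻¹' A) := by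
    rw [hA, ← Fintype.range_linearCombination, LinearMap.coe_range]
    exact (image_compl_lexNonMinimal φ.toAddMonoidHom).symm
  rw [hrange, indicator_image_eq_sum_fibers _ _ hinj]
  refine Submodule.sum_mem _ fun a ha => ?_
  have haB : a ≤ B := Finset.mem_Iic.1 (Finset.mem_filter.1 ha).1
  exact indicator_image_inf_fiber_mem z haB (hinj.mono fun l (hl : l ⊓ B = a) => by
    rwa [mem_preimage, hl])

theorem Submodule.fg_of_add_mem_imp_mem {M : Type*} [AddCommMonoid M] [PartialOrder M]
    [CanonicallyOrderedAdd M] [IsRightCancelAdd M] [WellQuasiOrderedLE M] (N : Submodule ℕ M)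
    (hN : ∀ a b, a ∈ N → a + b ∈ N → b ∈ N) : N.FG := by
  let P : M → Prop := fun a => a ∈ N ∧ a ≠ 0
  have hfin : {a | Minimal P a}.Finite :=
    WellQuasiOrderedLE.finite_of_isAntichain (setOfPred_minimal_antichain _)
  refine ⟨hfin.toFinset, le_antisymm (span_le.2 fun a ha => (hfin.mem_toFinset.1 ha).1.1)
    fun a ha => ?_⟩
  induction a using WellFoundedLT.induction with
  | _ a ih =>
    by_cases h0 : a = 0
    · exact h0 ▸ zero_mem _
    obtain ⟨g, hga, hg⟩ := exists_minimal_le_of_wellFoundedLT P a ⟨ha, h0⟩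
    obtain ⟨c, rfl⟩ := exists_add_of_le hga
    have hlt : c < g + c := lt_of_le_of_ne le_add_self fun h => hg.1.2 (add_eq_right.1 h.symm)
    exact add_mem (subset_span (hfin.mem_toFinset.2 hg)) (ih c hlt (hN g c hg.1.1 ha))

theorem Submodule.FG.inf_of_isCancelAdd {M : Type*} [AddCommMonoid M] [IsCancelAdd M]
    {P Q : Submodule ℕ M} (hP : P.FG) (hQ : Q.FG) : (P ⊓ Q).FG := by
  obtain ⟨p, v, rfl⟩ := fg_iff_exists_fin_generating_family.1 hP
  obtain ⟨q, w, rfl⟩ := fg_iff_exists_fin_generating_family.1 hQ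
  let f := (Fintype.linearCombination ℕ v).comp (LinearMap.fst ℕ _ (Fin q → ℕ))
  let g := (Fintype.linearCombination ℕ w).comp (LinearMap.snd ℕ (Fin p → ℕ) _)
  have heq : span ℕ (range v) ⊓ span ℕ (range w) = (LinearMap.eqLocus f g).map f := by
    ext b
    simp only [← Fintype.range_linearCombination, mem_inf, LinearMap.mem_range, mem_map,
      LinearMap.mem_eqLocus, Prod.exists]
    constructor
    · rintro ⟨⟨α, rfl⟩, β, hβ⟩
      exact ⟨α, β, hβ.symm, rfl⟩
    · rintro ⟨α, β, hαβ, rfl⟩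
      exact ⟨⟨α, rfl⟩, β, hαβ.symm⟩
  rw [heq]
  refine (fg_of_add_mem_imp_mem _ fun a b ha hab => ?_).map f
  rw [LinearMap.mem_eqLocus] at ha hab ⊢
  rw [map_add, map_add, ha] at hab
  exact add_left_cancel hab

theorem indicator_biUnion_fg_mem {ι : Type*} {d : ℕ} (s : Finset ι)
    (P : ι → Submodule ℕ (Fin d → ℕ)) (hP : ∀ i ∈ s, (P i).FG) :
    (⋃ i ∈ s, (P i : Set (Fin d → ℕ))).indicator 1 ∈ eventuallyQuasiconstant d := by
  rw [show (⋃ i ∈ s, (P i : Set (Fin d → ℕ))).indicator 1 = ∑ t ∈ s.powerset with t.Nonempty,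
      (-1 : ℤ) ^ (t.card + 1) • ((t.inf P : Submodule ℕ (Fin d → ℕ)) : Set (Fin d → ℕ)).indicator 1
      from funext fun b => by
        simp [Finset.indicator_biUnion_eq_sum_powerset, Finset.inf_eq_iInf, Submodule.coe_iInf]]
  refine Submodule.sum_mem _ fun t ht => Submodule.smul_of_tower_mem _ _ ?_
  obtain ⟨n, z, hz⟩ := Submodule.fg_iff_exists_fin_generating_family.1 <|
    Finset.inf_induction Module.Finite.fg_top (fun _ h₁ _ h₂ => h₁.inf_of_isCancelAdd h₂)
      fun i hi => hP i (Finset.mem_powerset.1 (Finset.mem_filter.1 ht).1 hi)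
  rw [← hz]
  exact indicator_span_range_mem z

theorem indicator_natCast_eq_sum_sub {α : Type*} (A : Set α) (g : α → ℕ) {t : ℕ}
    (hg : ∀ a ∈ A, g a ≤ t) :
    A.indicator (fun a => (g a : ℚ)) =
      ∑ n ∈ Finset.range t, (A.indicator 1 - {a | a ∈ A ∧ g a ≤ n}.indicator 1) := by
  funext a
  by_cases ha : a ∈ A
  · obtain ⟨r, hr⟩ := Nat.exists_eq_add_of_le (hg a ha)
    have hlow : ∑ n ∈ Finset.range (g a), {a | a ∈ A ∧ g a ≤ n}.indicator (1 : α → ℚ) a = 0 :=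
      Finset.sum_eq_zero fun n hn =>
        indicator_of_notMem (fun h => (Finset.mem_range.1 hn).not_ge h.2) _
    simp [ha, hr, Finset.sum_range_add, hlow]
  · simp [ha]

theorem SgNV_eq_span {ι : Type*} [Fintype ι] {d : ℕ} (x : ι → Fin d → ℕ) :
    SgNV x = Submodule.span ℕ (range x) := by
  ext b
  exact (Submodule.mem_span_range_iff_exists_fun ℕ).symm

theorem m0NV_le_iff {ι : Type*} [Fintype ι] {d : ℕ} {x : ι → Fin d → ℕ} {b : Fin d → ℕ}
    (hb : b ∈ SgNV x) {n : ℕ} :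
    m0NV x b ≤ n ↔ ∃ lam : ι → ℕ, ∑ i, lam i • x i = b ∧
      (Finset.univ.filter fun i => lam i ≠ 0).card ≤ n := by
  constructor
  · intro h
    obtain ⟨lam0, hlam0⟩ := hb
    have hmem : m0NV x b ∈ {k | ∃ lam : ι → ℕ, (∑ i, lam i • x i = b) ∧
        k = (Finset.univ.filter fun i => lam i ≠ 0).card} := Nat.sInf_mem ⟨_, lam0, hlam0, rfl⟩
    obtain ⟨lam, hlam, hk⟩ := hmem
    exact ⟨lam, hlam, hk ▸ h⟩
  · rintro ⟨lam, hlam, hn⟩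
    exact le_trans (Nat.sInf_le ⟨lam, hlam, rfl⟩) hn

theorem m0NV_le_card {ι : Type*} [Fintype ι] {d : ℕ} {x : ι → Fin d → ℕ} {b : Fin d → ℕ}
    (hb : b ∈ SgNV x) : m0NV x b ≤ Fintype.card ι :=
  let ⟨lam, hlam⟩ := hb
  (m0NV_le_iff hb).2 ⟨lam, hlam, Finset.card_filter_le _ _⟩

theorem setOf_m0NV_le_eq_biUnion {ι : Type*} [Fintype ι] {d : ℕ}
    (x : ι → Fin d → ℕ) (n : ℕ) :
    {b | b ∈ SgNV x ∧ m0NV x b ≤ n} =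
      ⋃ S ∈ Finset.univ.filter (fun S : Finset ι => S.card ≤ n),
        (Submodule.span ℕ (x '' S) : Set (Fin d → ℕ)) := by
  ext b
  simp only [mem_iUnion, Finset.mem_filter, Finset.mem_univ, true_and, exists_prop,
    SetLike.mem_coe]
  constructor
  · rintro ⟨hb, hm⟩
    obtain ⟨lam, rfl, hn⟩ := (m0NV_le_iff hb).1 hm
    refine ⟨_, hn, Submodule.sum_mem _ fun i _ => ?_⟩
    by_cases hi : lam i = 0
    · simp [hi]
    · exact Submodule.smul_mem _ _ (Submodule.subset_span ⟨i, by simpa using hi, rfl⟩)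
  · rintro ⟨S, hS, hb⟩
    obtain ⟨l, hl, rfl⟩ := (Finsupp.mem_span_image_iff_linearCombination ℕ).1 hb
    have hsum : Finsupp.linearCombination ℕ x l = ∑ i, l i • x i := by
      rw [Finsupp.linearCombination_apply, Finsupp.sum_fintype _ _ fun i => zero_smul ℕ (x i)]
    have hmem : Finsupp.linearCombination ℕ x l ∈ SgNV x := ⟨l, hsum.symm⟩
    refine ⟨hmem, (m0NV_le_iff hmem).2 ⟨l, hsum.symm, le_trans (Finset.card_le_card ?_) hS⟩⟩
    intro i hi
    exact (Finsupp.mem_supported ℕ l).1 hl (by simpa using hi)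

theorem exists_sum_of_mem_eventuallyQuasiconstant {d : ℕ} {f : (Fin d → ℕ) → ℚ}
    (hf : f ∈ eventuallyQuasiconstant d) :
    ∃ (k : ℕ) (s : Fin k → ℕ) (b0 : Fin k → Fin d → ℕ)
      (v : (i : Fin k) → Fin (s i) → Fin d → ℕ) (cst : Fin k → ℚ),
      (∀ i, LinearIndependent ℚ (fun l : Fin (s i) => fun j : Fin d => ((v i l j : ℚ)))) ∧
      ∀ b, f b = ∑ i, (TransCone (b0 i) (v i)).indicator (fun _ => cst i) b := by
  obtain ⟨k, cst, g, hg⟩ := Submodule.mem_span_set'.1 hf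
  choose s b0 v hv hgv using fun i => (g i).2
  refine ⟨k, s, b0, v, cst, hv, fun b => ?_⟩
  rw [← hg, Finset.sum_apply]
  refine Finset.sum_congr rfl fun i _ => ?_
  by_cases hb : b ∈ TransCone (b0 i) (v i) <;> simp [hgv i, hb]

theorem m0_eventually_quasiconstant_general {d t : ℕ} (x : Fin t → Fin d → ℕ) :
    ∃ (k : ℕ) (s : Fin k → ℕ) (b0 : Fin k → Fin d → ℕ)
      (v : (i : Fin k) → Fin (s i) → Fin d → ℕ) (cst : Fin k → ℚ),
      (∀ i, LinearIndependent ℚ (fun l : Fin (s i) => fun j : Fin d => ((v i l j : ℚ)))) ∧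
      ∀ b : Fin d → ℕ,
        (SgNV x).indicator (fun b' => (m0NV x b' : ℚ)) b =
          ∑ i, (TransCone (b0 i) (v i)).indicator (fun _ => cst i) b := by
  refine exists_sum_of_mem_eventuallyQuasiconstant ?_
  rw [indicator_natCast_eq_sum_sub (SgNV x) (m0NV x) fun b hb => m0NV_le_card hb]
  refine Submodule.sum_mem _ fun n _ => Submodule.sub_mem _ ?_ ?_
  · rw [SgNV_eq_span]
    exact indicator_span_range_mem x
  · rw [setOf_m0NV_le_eq_biUnion]
    exact indicator_biUnion_fg_mem _ _ fun S _ => Submodule.fg_span (S.finite_toSet.image x)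

/-- **Theorem 3.** For any finite set of nonzero non-negative integer vectors
`X ⊂ ℤ^d`, the function `m₀ : Sg(X) → ℤ_{≥0}` is eventually quasiconstant:
extended by `0` outside `Sg(X)`, it is a finite sum of functions, each of which
vanishes outside a translated cone (generated by linearly independent vectors)
and is constant on that cone. -/
theorem m0_eventually_quasiconstant {d t : ℕ} (x : Fin t → Fin d → ℕ)
    (hinj : Function.Injective x) (hnz : ∀ i, x i ≠ 0) :
    ∃ (k : ℕ) (s : Fin k → ℕ) (b0 : Fin k → Fin d → ℕ)
      (v : (i : Fin k) → Fin (s i) → Fin d → ℕ) (cst : Fin k → ℚ),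
      (∀ i, LinearIndependent ℚ (fun l : Fin (s i) => fun j : Fin d => ((v i l j : ℚ)))) ∧
      ∀ b : Fin d → ℕ,
        (SgNV x).indicator (fun b' => (m0NV x b' : ℚ)) b =
          ∑ i, (TransCone (b0 i) (v i)).indicator (fun _ => cst i) b :=
  m0_eventually_quasiconstant_general x
end

section
/- Let X be a finite set of positive integers and let m be the minimal cardinality of a subset X' ⊆ X with gcd(X') = 1. Then there exist infinitely many b ∈ Sg(X) with m_0(b) = m; equivalently, the set Sg(X) \ ⋃_{X' ⊆ X, |X'| < m} Sg(X') is infinite and consists exactly of the elements b ∈ Sg(X) with m_0(b) ≥ m. -/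
lemma finset_bezout (Y : Finset ℕ) :
    ∃ c : ℕ → ℤ, ∑ i ∈ Y, c i * (i : ℤ) = ((Y.gcd id : ℕ) : ℤ) := by
  classical
  induction Y using Finset.induction with
  | empty => exact ⟨0, by simp⟩
  | @insert a Y ha ih =>
    obtain ⟨c, hc⟩ := ih
    refine ⟨fun i => if i = a then Nat.gcdA a (Y.gcd id) else Nat.gcdB a (Y.gcd id) * c i, ?_⟩
    rw [Finset.sum_insert ha, Finset.gcd_insert]
    have h1 : ∑ i ∈ Y, (if i = a then Nat.gcdA a (Y.gcd id) else Nat.gcdB a (Y.gcd id) * c i) * (i : ℤ)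
        = Nat.gcdB a (Y.gcd id) * ∑ i ∈ Y, c i * i := by
      rw [Finset.mul_sum]
      refine Finset.sum_congr rfl fun i hi => ?_
      rw [if_neg (by rintro rfl; exact ha hi), mul_assoc]
    rw [h1, hc]
    beta_reduce
    rw [if_pos rfl]
    have h2 : gcd (id a) (Y.gcd id) = Nat.gcd a (Y.gcd id) := rfl
    rw [h2, Nat.gcd_eq_gcd_ab a (Y.gcd id)]
    ring

/-- **Proposition (sharpness).** Let `m` be the minimal cardinality of a
relatively prime subset of `X`.  Then there are infinitely many `b ∈ Sg(X)`
with `m₀(b) = m`; equivalently, the set `Sg(X) \ ⋃_{X' ⊆ X, |X'| < m} Sg(X')`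
is infinite and consists exactly of the elements `b ∈ Sg(X)` with
`m₀(b) ≥ m`. -/
theorem m0_eq_min_coprime_card_infinitely_often (X : Finset ℕ)
    (hpos : ∀ n ∈ X, 0 < n)
    (hex : ∃ Y ⊆ X, Y.gcd id = 1)
    (m : ℕ) (hm : m = sInf { k | ∃ Y ⊆ X, Y.gcd id = 1 ∧ Y.card = k }) :
    { b | b ∈ SgN X ∧ m0N X b = m }.Infinite ∧
    { b | b ∈ SgN X ∧ ∀ Y ⊆ X, Y.card < m → b ∉ SgN Y }.Infinite ∧
    ∀ b ∈ SgN X, ((∀ Y ⊆ X, Y.card < m → b ∉ SgN Y) ↔ m ≤ m0N X b) := by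
  classical
  -- gcd divides everything in SgN
  have hdvd : ∀ (Y : Finset ℕ) (b : ℕ), b ∈ SgN Y → Y.gcd id ∣ b := by
    rintro Y b ⟨lam, rfl⟩
    exact Finset.dvd_sum fun i hi => Dvd.dvd.mul_left (Finset.gcd_dvd hi) _
  -- minimal coprime subset
  have hset : {k | ∃ Y ⊆ X, Y.gcd id = 1 ∧ Y.card = k}.Nonempty := by
    obtain ⟨Y, hYX, hY⟩ := hex; exact ⟨Y.card, Y, hYX, hY, rfl⟩
  obtain ⟨Y₀, hY₀X, hY₀g, hY₀c⟩ : ∃ Y ⊆ X, Y.gcd id = 1 ∧ Y.card = m := by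
    have := Nat.sInf_mem hset
    rw [← hm] at this
    exact this
  -- upper bound for m0N from membership in a subsemigroup
  have hUB : ∀ (b : ℕ) (Y : Finset ℕ), Y ⊆ X → b ∈ SgN Y → m0N X b ≤ Y.card := by
    rintro b Y hYX ⟨lam, hlam⟩
    set lam' : ℕ → ℕ := fun i => if i ∈ Y then lam i else 0 with hl'
    have hsum : ∑ i ∈ X, lam' i * i = b := by
      rw [← Finset.sum_subset hYX (fun i _ hiY => by simp [lam', hiY]), ← hlam]
      exact Finset.sum_congr rfl fun i hi => by simp [lam', hi]
    have h1 : m0N X b ≤ (X.filter fun i => lam' i ≠ 0).card :=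
      Nat.sInf_le ⟨lam', hsum, rfl⟩
    have h2 : (X.filter fun i => lam' i ≠ 0) ⊆ Y := by
      intro i hi
      rw [Finset.mem_filter] at hi
      by_contra hiY
      exact hi.2 (by simp [lam', hiY])
    exact h1.trans (Finset.card_le_card h2)
  -- third claim
  have h3 : ∀ b ∈ SgN X, ((∀ Y ⊆ X, Y.card < m → b ∉ SgN Y) ↔ m ≤ m0N X b) := by
    intro b hb
    constructor
    · intro h
      have hne : {k | ∃ lam : ℕ → ℕ, (∑ i ∈ X, lam i * i = b) ∧
          k = (X.filter fun i => lam i ≠ 0).card}.Nonempty := by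
        obtain ⟨lam, hlam⟩ := hb
        exact ⟨_, lam, hlam, rfl⟩
      obtain ⟨lam, hlam, hk⟩ := Nat.sInf_mem hne
      have hbY : b ∈ SgN (X.filter fun i => lam i ≠ 0) := by
        refine ⟨lam, ?_⟩
        rw [← hlam]
        refine Finset.sum_filter_of_ne ?_
        intro i hi hne2
        exact left_ne_zero_of_mul hne2
      have hnot : ¬ ((X.filter fun i => lam i ≠ 0).card < m) :=
        fun hlt => h _ (Finset.filter_subset _ _) hlt hbY
      have hk' : m0N X b = (X.filter fun i => lam i ≠ 0).card := hk
      rw [hk']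
      exact le_of_not_gt hnot
    · intro hle Y hYX hYc hbY
      have := hUB b Y hYX hbY
      omega
  -- Bezout coefficients for Y₀
  obtain ⟨c, hc⟩ := finset_bezout Y₀
  rw [hY₀g] at hc
  set S := ∑ i ∈ Y₀, i with hS'
  set D := ∏ Y ∈ X.powerset.filter (fun Y => Y.gcd id ≠ 1 ∧ Y.Nonempty), Y.gcd id with hD'
  have hY₀ne : Y₀.Nonempty := by
    rw [Finset.nonempty_iff_ne_empty]
    rintro rfl
    simp [Finset.gcd_empty] at hY₀g
  have hS : 0 < S := Finset.sum_pos (fun i hi => hpos i (hY₀X hi)) hY₀ne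
  have hD : 0 < D := by
    apply Nat.pos_of_ne_zero
    rw [hD']
    rw [Finset.prod_ne_zero_iff]
    intro Y hY
    rw [Finset.mem_filter, Finset.mem_powerset] at hY
    intro h0
    rw [Finset.gcd_eq_zero_iff] at h0
    obtain ⟨i, hi⟩ := hY.2.2
    exact absurd (h0 i hi) (by have := hpos i (hY.1 hi); simp; omega)
  set C := Y₀.sup fun i => (-(c i)).toNat with hC'
  set g : ℕ → ℕ := fun N => 1 + (C + N) * D * S with hg'
  -- key membership
  have hmemT : ∀ N, g N ∈ SgN X ∧ g N ∈ SgN Y₀ ∧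
      ∀ Y ⊆ X, Y.card < m → g N ∉ SgN Y := by
    intro N
    set lam : ℕ → ℕ := fun i => if i ∈ Y₀ then (c i + ((C + N) * D : ℕ)).toNat else 0 with hlam'
    have hcast : ∀ i ∈ Y₀, ((lam i : ℕ) : ℤ) = c i + ((C + N) * D : ℕ) := by
      intro i hi
      have h1 : (-(c i)).toNat ≤ C := Finset.le_sup (f := fun i => (-(c i)).toNat) hi
      have h2 : C ≤ (C + N) * D := le_trans (Nat.le_add_right _ _) (Nat.le_mul_of_pos_right _ hD)
      have h4 : ((-(c i)).toNat : ℤ) ≤ (((C + N) * D : ℕ) : ℤ) := by exact_mod_cast h1.trans h2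
      have h5 := Int.self_le_toNat (-(c i))
      simp only [hlam', if_pos hi]
      rw [Int.toNat_of_nonneg (by linarith)]
    have hsz : ((S : ℕ) : ℤ) = ∑ i ∈ Y₀, (i : ℤ) := by rw [hS']; push_cast; ring
    have hsumY : ∑ i ∈ Y₀, lam i * i = g N := by
      have hz : ((∑ i ∈ Y₀, lam i * i : ℕ) : ℤ) = ((1 + (C + N) * D * S : ℕ) : ℤ) := by
        rw [Nat.cast_sum]
        rw [Finset.sum_congr rfl (fun i hi => by push_cast; rw [hcast i hi])]
        simp only [add_mul, Finset.sum_add_distrib, hc, ← Finset.mul_sum, ← hsz]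
        push_cast
        ring
      have : ∑ i ∈ Y₀, lam i * i = 1 + (C + N) * D * S := by exact_mod_cast hz
      rw [this, hg']
    have hsumX : ∑ i ∈ X, lam i * i = g N := by
      rw [← Finset.sum_subset hY₀X (fun i _ hiY => by simp [hlam', hiY])]
      exact hsumY
    refine ⟨⟨lam, hsumX⟩, ⟨lam, hsumY⟩, ?_⟩
    intro Y hYX hYc hbY
    have hd := hdvd Y _ hbY
    rcases eq_or_ne (Y.gcd id) 1 with h1 | h1
    · have : m ≤ Y.card := by
        rw [hm]
        exact Nat.sInf_le ⟨Y, hYX, h1, rfl⟩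
      omega
    rcases eq_or_ne (Y.gcd id) 0 with h0 | h0
    · rw [h0, zero_dvd_iff] at hd
      simp [hg'] at hd
    have hne : Y.Nonempty := by
      rw [Finset.nonempty_iff_ne_empty]
      rintro rfl
      exact h0 Finset.gcd_empty
    have hdD : Y.gcd id ∣ D := by
      rw [hD']
      exact Finset.dvd_prod_of_mem _ (Finset.mem_filter.2 ⟨Finset.mem_powerset.2 hYX, h1, hne⟩)
    have hdx : Y.gcd id ∣ (C + N) * D * S := ((hdD.mul_left _).mul_right _)
    have hone : Y.gcd id ∣ 1 := by
      have h6 := Nat.dvd_sub hd hdx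
      have h7 : g N - (C + N) * D * S = 1 := by simp [hg']
      rwa [h7] at h6
    exact h1 (Nat.dvd_one.1 hone)
  have hinj : Function.Injective g := by
    intro a b hab
    simp only [hg'] at hab
    have hDS : 0 < D * S := Nat.mul_pos hD hS
    have h1 : (C + a) * (D * S) = (C + b) * (D * S) := by
      rw [← mul_assoc, ← mul_assoc]; omega
    have := Nat.eq_of_mul_eq_mul_right hDS h1
    omega
  refine ⟨?_, ?_, h3⟩
  · apply Set.infinite_of_injective_forall_mem hinj
    intro N
    obtain ⟨hSg, hSg0, hexcl⟩ := hmemT N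
    refine ⟨hSg, le_antisymm ?_ ((h3 _ hSg).1 hexcl)⟩
    have := hUB _ Y₀ hY₀X hSg0
    omega
  · apply Set.infinite_of_injective_forall_mem hinj
    intro N
    obtain ⟨hSg, _, hexcl⟩ := hmemT N
    exact ⟨hSg, hexcl⟩
end
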